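/- arXiv:2508.21677 — 2 statements merged into one kernel-verified Lean document; each statement's English description precedes it below -/
import Mathlib

section
/- Let P be positive definite, ρ ∈ (0,1), K, B matrices with ‖(A + BK)x‖_P ≤ ρ‖x‖_P for all x, d = ‖P^{1/2}B‖, β(x,a) = a₀‖a‖ + b₀‖Vx‖ + c₀ a bound on ‖Δ(x,a)‖, and L_β = a₀‖KP^{-1/2}‖ + b₀‖VP^{-1/2}‖. Suppose ‖x - x̄‖_P ≤ δ, a = ā + K(x - x̄), x₊ = Ax + B(a + Δ(x,a)) with ‖Δ(x,a)‖ ≤ β(x,a), and x̄₊ = Ax̄ + Bā. Then ‖x₊ - x̄₊‖_P ≤ (ρ + dL_β)δ + dβ(x̄, ā). -/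
open scoped Matrix.Norms.L2Operator
open Matrix

namespace Matrix.PosSemidef

open scoped ComplexOrder

/-- The positive semidefinite square root of a positive semidefinite matrix
(definition from the older Mathlib, since removed there). -/
noncomputable def sqrt {n 𝕜 : Type*} [RCLike 𝕜] [Fintype n] [DecidableEq n]
    {A : Matrix n n 𝕜} (hA : A.PosSemidef) : Matrix n n 𝕜 :=
  hA.1.eigenvectorUnitary.1 * diagonal ((↑) ∘ (√·) ∘ hA.1.eigenvalues) *
  (star hA.1.eigenvectorUnitary : Matrix n n 𝕜)

end Matrix.PosSemidef

noncomputable def eNorm {n : ℕ} (x : Fin n → ℝ) : ℝ := Real.sqrt (x ⬝ᵥ x)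

noncomputable def pNorm {n : ℕ} (P : Matrix (Fin n) (Fin n) ℝ) (x : Fin n → ℝ) : ℝ :=
  Real.sqrt (x ⬝ᵥ P *ᵥ x)

/-! With `e = x - x̄`, the error obeys `x₊ - x̄₊ = (A + BK)e + BΔ`. The first term contracts by `ρ`
in the `P`-norm, and the second has `P`-norm at most `d‖Δ‖ ≤ d β(x, a)`. Finally `β` is
`L_β`-Lipschitz with respect to `‖·‖_P`, because `‖M e‖ = ‖(M P^{-1/2}) (P^{1/2} e)‖ ≤
‖M P^{-1/2}‖ ‖e‖_P` for every matrix `M`, so `β(x, a) ≤ β(x̄, ā) + L_β δ`. -/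

namespace Matrix

open scoped ComplexOrder

variable {ι 𝕜 : Type*} [RCLike 𝕜] [Fintype ι] [DecidableEq ι] {A : Matrix ι ι 𝕜}

namespace PosSemidef

lemma sqrt_mul_self (hA : A.PosSemidef) : hA.sqrt * hA.sqrt = A := by
  let C : Matrix ι ι 𝕜 := hA.1.eigenvectorUnitary
  let E := diagonal ((↑) ∘ (√·) ∘ hA.1.eigenvalues : ι → 𝕜)
  suffices C * (E * (star C * C) * E) * star C = A by
    change (C * E * star C) * (C * E * star C) = A
    simpa only [← Matrix.mul_assoc] using this
  have hC : star C * C = 1 := by simp [C]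
  rw [hC, Matrix.mul_one, diagonal_mul_diagonal]
  conv_rhs => rw [hA.1.spectral_theorem]
  simp only [Unitary.conjStarAlgAut_apply]
  congr 2
  ext i j
  simp only [diagonal_apply, Function.comp_apply]
  split_ifs <;> simp [← RCLike.ofReal_mul, Real.mul_self_sqrt (hA.eigenvalues_nonneg _)]

lemma sqrt_isHermitian (hA : A.PosSemidef) : hA.sqrt.IsHermitian := by
  have hD : (diagonal ((↑) ∘ (√·) ∘ hA.1.eigenvalues : ι → 𝕜))ᴴ =
      diagonal ((↑) ∘ (√·) ∘ hA.1.eigenvalues) := by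
    rw [diagonal_conjTranspose]
    congr 1
    funext i
    simp [Pi.star_apply, RCLike.star_def]
  unfold Matrix.IsHermitian sqrt
  rw [conjTranspose_mul, conjTranspose_mul, hD]
  simp only [star_eq_conjTranspose, conjTranspose_conjTranspose, Matrix.mul_assoc]

end PosSemidef

lemma PosDef.isUnit_det_sqrt (hA : A.PosDef) : IsUnit hA.posSemidef.sqrt.det := by
  have hdet : IsUnit A.det := (isUnit_iff_isUnit_det A).mp hA.isUnit
  rw [← hA.posSemidef.sqrt_mul_self, det_mul] at hdet
  exact isUnit_of_mul_isUnit_left hdet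

end Matrix

section EuclideanNorm

variable {q n : ℕ}

lemma eNorm_eq_norm (x : Fin n → ℝ) : eNorm x = ‖(EuclideanSpace.equiv (Fin n) ℝ).symm x‖ := by
  simp [eNorm, EuclideanSpace.norm_eq, dotProduct, sq]

lemma eNorm_add_le (u v : Fin n → ℝ) : eNorm (u + v) ≤ eNorm u + eNorm v := by
  simpa only [eNorm_eq_norm, map_add] using norm_add_le _ _

lemma eNorm_mulVec_le (M : Matrix (Fin q) (Fin n) ℝ) (x : Fin n → ℝ) :
    eNorm (M *ᵥ x) ≤ ‖M‖ * eNorm x := by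
  rw [eNorm_eq_norm, eNorm_eq_norm]
  exact M.l2_opNorm_mulVec ((EuclideanSpace.equiv (Fin n) ℝ).symm x)

end EuclideanNorm

section WeightedNorm

variable {q n : ℕ} {P : Matrix (Fin n) (Fin n) ℝ}

lemma pNorm_eq_eNorm_sqrt_mulVec (hP : P.PosSemidef) (x : Fin n → ℝ) :
    pNorm P x = eNorm (hP.sqrt *ᵥ x) := by
  set S := hP.sqrt
  have hS : Sᵀ = S := by
    simpa only [IsHermitian, conjTranspose_eq_transpose_of_trivial] using hP.sqrt_isHermitian
  unfold pNorm eNorm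
  rw [← hP.sqrt_mul_self, ← mulVec_mulVec, dotProduct_mulVec, ← mulVec_transpose, hS]

lemma pNorm_add_le (hP : P.PosSemidef) (u v : Fin n → ℝ) :
    pNorm P (u + v) ≤ pNorm P u + pNorm P v := by
  simpa only [pNorm_eq_eNorm_sqrt_mulVec hP, mulVec_add] using eNorm_add_le _ _

lemma pNorm_mulVec_le (hP : P.PosSemidef) (B : Matrix (Fin n) (Fin q) ℝ) (w : Fin q → ℝ) :
    pNorm P (B *ᵥ w) ≤ ‖hP.sqrt * B‖ * eNorm w := by
  rw [pNorm_eq_eNorm_sqrt_mulVec hP, mulVec_mulVec]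
  exact eNorm_mulVec_le _ _

lemma eNorm_mulVec_le_mul_pNorm (hP : P.PosDef) (M : Matrix (Fin q) (Fin n) ℝ)
    (e : Fin n → ℝ) : eNorm (M *ᵥ e) ≤ ‖M * hP.posSemidef.sqrt⁻¹‖ * pNorm P e := by
  have hM : M *ᵥ e = (M * hP.posSemidef.sqrt⁻¹) *ᵥ (hP.posSemidef.sqrt *ᵥ e) := by
    rw [mulVec_mulVec, Matrix.mul_assoc, nonsing_inv_mul _ hP.isUnit_det_sqrt, Matrix.mul_one]
  rw [hM, pNorm_eq_eNorm_sqrt_mulVec hP.posSemidef]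
  exact eNorm_mulVec_le _ _

lemma eNorm_add_mulVec_le (hP : P.PosDef) (w : Fin q → ℝ) (M : Matrix (Fin q) (Fin n) ℝ)
    (e : Fin n → ℝ) :
    eNorm (w + M *ᵥ e) ≤ eNorm w + ‖M * hP.posSemidef.sqrt⁻¹‖ * pNorm P e :=
  (eNorm_add_le _ _).trans (add_le_add_right (eNorm_mulVec_le_mul_pNorm hP M e) _)

end WeightedNorm

theorem stmt_4_general {n m p : ℕ} (P : Matrix (Fin n) (Fin n) ℝ) (hP : P.PosDef)
    (ρ : ℝ) (hρ : ρ ∈ Set.Ioo (0 : ℝ) 1)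
    (A : Matrix (Fin n) (Fin n) ℝ) (B : Matrix (Fin n) (Fin m) ℝ)
    (K : Matrix (Fin m) (Fin n) ℝ) (V : Matrix (Fin p) (Fin n) ℝ)
    (hcontr : ∀ x : Fin n → ℝ, pNorm P ((A + B * K) *ᵥ x) ≤ ρ * pNorm P x)
    (d : ℝ) (hd : d = ‖hP.posSemidef.sqrt * B‖)
    (a₀ b₀ c₀ : ℝ) (ha₀ : 0 ≤ a₀) (hb₀ : 0 ≤ b₀)
    (β : (Fin n → ℝ) → (Fin m → ℝ) → ℝ)
    (hβ : ∀ x a, β x a = a₀ * eNorm a + b₀ * eNorm (V *ᵥ x) + c₀)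
    (Lβ : ℝ) (hLβ : Lβ = a₀ * ‖K * (hP.posSemidef.sqrt)⁻¹‖ + b₀ * ‖V * (hP.posSemidef.sqrt)⁻¹‖)
    (δ : ℝ) (x xb : Fin n → ℝ) (hδ : pNorm P (x - xb) ≤ δ)
    (a ab : Fin m → ℝ) (ha : a = ab + K *ᵥ (x - xb))
    (Δ : Fin m → ℝ) (hΔbound : eNorm Δ ≤ β x a)
    (xp xbp : Fin n → ℝ)
    (hxp : xp = A *ᵥ x + B *ᵥ (a + Δ)) (hxbp : xbp = A *ᵥ xb + B *ᵥ ab) :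
    pNorm P (xp - xbp) ≤ (ρ + d * Lβ) * δ + d * β xb ab := by
  have hsplit : xp - xbp = (A + B * K) *ᵥ (x - xb) + B *ᵥ Δ := by
    simp only [hxp, hxbp, ha, mulVec_sub, mulVec_add, add_mulVec, mulVec_mulVec]
    abel
  have hβ_lipschitz : β x a ≤ β xb ab + Lβ * δ := by
    have hKe := eNorm_add_mulVec_le hP ab K (x - xb)
    have hVe := eNorm_add_mulVec_le hP (V *ᵥ xb) V (x - xb)
    rw [← mulVec_add, add_sub_cancel] at hVe
    rw [← ha] at hKe
    rw [hβ, hβ, hLβ]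
    calc a₀ * eNorm a + b₀ * eNorm (V *ᵥ x) + c₀
        ≤ a₀ * (eNorm ab + ‖K * hP.posSemidef.sqrt⁻¹‖ * δ)
            + b₀ * (eNorm (V *ᵥ xb) + ‖V * hP.posSemidef.sqrt⁻¹‖ * δ) + c₀ := by
          gcongr
          · exact hKe.trans (by gcongr)
          · exact hVe.trans (by gcongr)
      _ = _ := by ring
  have hd₀ : 0 ≤ d := hd ▸ norm_nonneg _
  calc pNorm P (xp - xbp)
      ≤ pNorm P ((A + B * K) *ᵥ (x - xb)) + d * eNorm Δ := by
        rw [hsplit, hd]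
        exact (pNorm_add_le hP.posSemidef _ _).trans (add_le_add_right (pNorm_mulVec_le _ _ _) _)
    _ ≤ ρ * δ + d * (β xb ab + Lβ * δ) := by
        gcongr
        · exact (hcontr _).trans (mul_le_mul_of_nonneg_left hδ hρ.1.le)
        · exact hΔbound.trans hβ_lipschitz
    _ = (ρ + d * Lβ) * δ + d * β xb ab := by ring

theorem stmt_4 {n m p : ℕ} (P : Matrix (Fin n) (Fin n) ℝ) (hP : P.PosDef)
    (ρ : ℝ) (hρ : ρ ∈ Set.Ioo (0 : ℝ) 1)
    (A : Matrix (Fin n) (Fin n) ℝ) (B : Matrix (Fin n) (Fin m) ℝ)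
    (K : Matrix (Fin m) (Fin n) ℝ) (V : Matrix (Fin p) (Fin n) ℝ)
    (hcontr : ∀ x : Fin n → ℝ, pNorm P ((A + B * K) *ᵥ x) ≤ ρ * pNorm P x)
    (d : ℝ) (hd : d = ‖hP.posSemidef.sqrt * B‖)
    (a₀ b₀ c₀ : ℝ) (ha₀ : 0 ≤ a₀) (hb₀ : 0 ≤ b₀) (hc₀ : 0 ≤ c₀)
    (β : (Fin n → ℝ) → (Fin m → ℝ) → ℝ)
    (hβ : ∀ x a, β x a = a₀ * eNorm a + b₀ * eNorm (V *ᵥ x) + c₀)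
    (Lβ : ℝ) (hLβ : Lβ = a₀ * ‖K * (hP.posSemidef.sqrt)⁻¹‖ + b₀ * ‖V * (hP.posSemidef.sqrt)⁻¹‖)
    (δ : ℝ) (x xb : Fin n → ℝ) (hδ : pNorm P (x - xb) ≤ δ)
    (a ab : Fin m → ℝ) (ha : a = ab + K *ᵥ (x - xb))
    (Δ : Fin m → ℝ) (hΔbound : eNorm Δ ≤ β x a)
    (xp xbp : Fin n → ℝ)
    (hxp : xp = A *ᵥ x + B *ᵥ (a + Δ)) (hxbp : xbp = A *ᵥ xb + B *ᵥ ab) :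
    pNorm P (xp - xbp) ≤ (ρ + d * Lβ) * δ + d * β xb ab :=
  stmt_4_general P hP ρ hρ A B K V hcontr d hd a₀ b₀ c₀ ha₀ hb₀ β hβ Lβ hLβ δ x xb hδ a ab ha Δ
    hΔbound xp xbp hxp hxbp
end

section
/- Let A, E, Y, B be real matrices with E symmetric positive definite, and ρ > 0. Define P = E⁻¹ and K = Y E⁻¹. Then the block matrix [[ρ²E, (AE + BY)ᵀ], [AE + BY, E]] is positive semidefinite if and only if ‖(A + BK)x‖_P ≤ ρ‖x‖_P for all x ∈ ℝⁿ, where ‖x‖_P = √(xᵀPx). -/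
/-!
Write `M = A + BK`, so that `AE + BY = ME`. Since `E ≻ 0`, the block matrix is positive
semidefinite iff its Schur complement `ρ²E - (ME)ᵀE⁻¹(ME)` is. That complement is the congruence
`E (ρ²P - MᵀPM) E` by the invertible `E`, so it is positive semidefinite iff `ρ²P - MᵀPM` is, i.e.
iff `(Mx)ᵀP(Mx) ≤ ρ² xᵀPx` for all `x`; taking square roots gives `‖Mx‖_P ≤ ρ‖x‖_P`.
-/

open scoped Matrix.Norms.L2Operator
open Matrix

namespace Matrix

variable {ι : Type*} [Fintype ι]

theorem posSemidef_smul_sub_transpose_mul_mul_iff {P : Matrix ι ι ℝ} (hP : P.IsSymm) (c : ℝ)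
    (M : Matrix ι ι ℝ) :
    (c • P - Mᵀ * P * M).PosSemidef ↔
      ∀ x, (M *ᵥ x) ⬝ᵥ P *ᵥ (M *ᵥ x) ≤ c * (x ⬝ᵥ P *ᵥ x) := by
  have hquad : ∀ x, x ⬝ᵥ (c • P - Mᵀ * P * M) *ᵥ x =
      c * (x ⬝ᵥ P *ᵥ x) - (M *ᵥ x) ⬝ᵥ P *ᵥ (M *ᵥ x) := fun x => by
    rw [sub_mulVec, dotProduct_sub, smul_mulVec, dotProduct_smul, smul_eq_mul, ← mulVec_mulVec,
      ← mulVec_mulVec, dotProduct_mulVec x Mᵀ, vecMul_transpose]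
  have hsymm : (c • P - Mᵀ * P * M).IsHermitian := by
    rw [isHermitian_iff_isSymm, IsSymm, transpose_sub, transpose_smul, transpose_mul,
      transpose_mul, transpose_transpose, hP.eq, Matrix.mul_assoc]
  simp only [posSemidef_iff_dotProduct_mulVec, star_trivial, hquad, sub_nonneg, hsymm,
    true_and]

variable [DecidableEq ι]

theorem smul_sub_transpose_mul_mul_eq_transpose_mul_mul {𝕜 : Type*} [Field 𝕜]
    {E : Matrix ι ι 𝕜} (hEs : E.IsSymm) (hE : IsUnit E.det) (c : 𝕜) (M : Matrix ι ι 𝕜) :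
    c • E - (M * E)ᵀ * E⁻¹ * (M * E) = Eᵀ * (c • E⁻¹ - Mᵀ * E⁻¹ * M) * E := by
  rw [hEs.eq, transpose_mul, hEs.eq, Matrix.mul_sub, Matrix.sub_mul, Matrix.mul_smul,
    Matrix.smul_mul, mul_nonsing_inv E hE, Matrix.one_mul]
  simp only [Matrix.mul_assoc]

theorem posSemidef_fromBlocks_iff_posSemidef_smul_inv_sub {E : Matrix ι ι ℝ} (hE : E.PosDef)
    (c : ℝ) (M : Matrix ι ι ℝ) :
    (fromBlocks (c • E) (M * E)ᵀ (M * E) E).PosSemidef ↔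
      (c • E⁻¹ - Mᵀ * E⁻¹ * M).PosSemidef := by
  have : Invertible E := hE.isUnit.invertible
  have hschur := PosDef.fromBlocks₂₂ (c • E) (M * E)ᵀ hE
  rw [conjTranspose_eq_transpose_of_trivial, transpose_transpose] at hschur
  rw [hschur, smul_sub_transpose_mul_mul_eq_transpose_mul_mul
    (isHermitian_iff_isSymm.mp hE.isHermitian) ((isUnit_iff_isUnit_det E).mp hE.isUnit),
    ← conjTranspose_eq_transpose_of_trivial, ← star_eq_conjTranspose,
    hE.isUnit.posSemidef_star_left_conjugate_iff]

end Matrix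

theorem pNorm_le_mul_pNorm_iff {n : ℕ} {P : Matrix (Fin n) (Fin n) ℝ} (hP : P.PosSemidef)
    {ρ : ℝ} (hρ : 0 ≤ ρ) (x y : Fin n → ℝ) :
    pNorm P y ≤ ρ * pNorm P x ↔ y ⬝ᵥ P *ᵥ y ≤ ρ ^ 2 * (x ⬝ᵥ P *ᵥ x) := by
  have hx : 0 ≤ x ⬝ᵥ P *ᵥ x := by simpa using hP.dotProduct_mulVec_nonneg x
  have hρx : ρ * pNorm P x = √(ρ ^ 2 * (x ⬝ᵥ P *ᵥ x)) := by
    rw [pNorm, Real.sqrt_mul (sq_nonneg ρ), Real.sqrt_sq hρ]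
  rw [hρx, pNorm, Real.sqrt_le_sqrt_iff (by positivity)]

theorem stmt_18 {n m : ℕ} (A : Matrix (Fin n) (Fin n) ℝ) (B : Matrix (Fin n) (Fin m) ℝ)
    (E : Matrix (Fin n) (Fin n) ℝ) (Y : Matrix (Fin m) (Fin n) ℝ)
    (hE : E.PosDef) (ρ : ℝ) (hρ : 0 < ρ)
    (P : Matrix (Fin n) (Fin n) ℝ) (hPdef : P = E⁻¹)
    (K : Matrix (Fin m) (Fin n) ℝ) (hKdef : K = Y * E⁻¹) :
    (Matrix.fromBlocks ((ρ ^ 2) • E) (A * E + B * Y)ᵀ (A * E + B * Y) E).PosSemidef ↔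
      ∀ x : Fin n → ℝ, pNorm P ((A + B * K) *ᵥ x) ≤ ρ * pNorm P x := by
  have hME : A * E + B * Y = (A + B * K) * E := by
    rw [hKdef, Matrix.add_mul, Matrix.mul_assoc B, Matrix.mul_assoc Y,
      nonsing_inv_mul E ((isUnit_iff_isUnit_det E).mp hE.isUnit), Matrix.mul_one]
  have hP : P.PosDef := hPdef ▸ hE.inv
  rw [hME, posSemidef_fromBlocks_iff_posSemidef_smul_inv_sub hE, ← hPdef,
    posSemidef_smul_sub_transpose_mul_mul_iff (isHermitian_iff_isSymm.mp hP.isHermitian)]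
  exact forall_congr' fun x => (pNorm_le_mul_pNorm_iff hP.posSemidef hρ.le x _).symm
end
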